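/- With Box^{(1)} the 4×4 matrix over U(𝔤_t) with rows (0,0,0,0), (0,0,0,0), (X2, −X1, 1, 0), (tX3, 0, −tX1, t²), and with d^{(0)}, d_0^{(0)}, d^{(1)}, d_0^{(1)} the matrices given above, one has Box^{(1)} = d^{(0)}·(d_0^{(0)})ᵀ + (d_0^{(1)})ᵀ·d^{(1)}, where d_0^{(0)} is the 4×1 zero matrix and d_0^{(1)} is the 6×4 matrix whose only nonzero entries are −1 in position (1,3) and −t in position (2,4). -/

import Mathlib

/-- The underlying type of the Engel Lie algebra `𝔤_t`. -/
def EngelAlg (_t : ℝ) : Type := Fin 4 → ℝ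

noncomputable instance (t : ℝ) : AddCommGroup (EngelAlg t) :=
  inferInstanceAs (AddCommGroup (Fin 4 → ℝ))

noncomputable instance (t : ℝ) : Module ℝ (EngelAlg t) :=
  inferInstanceAs (Module ℝ (Fin 4 → ℝ))


@[simp] lemma EngelAlg.add_apply {t : ℝ} (x y : EngelAlg t) (i : Fin 4) :
    (x + y) i = x i + y i := rfl
@[simp] lemma EngelAlg.smul_apply {t : ℝ} (r : ℝ) (x : EngelAlg t) (i : Fin 4) :
    (r • x) i = r * x i := rfl
@[simp] lemma EngelAlg.zero_apply {t : ℝ} (i : Fin 4) : (0 : EngelAlg t) i = 0 := rfl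

/-- The Engel bracket: `[X1,X2] = X3`, `[X1,X3] = t·X4`. -/
def engelBracket (t : ℝ) (x y : Fin 4 → ℝ) : Fin 4 → ℝ := fun i =>
  if i = 2 then x 0 * y 1 - x 1 * y 0
  else if i = 3 then t * (x 0 * y 2 - x 2 * y 0) else 0

noncomputable instance (t : ℝ) : LieRing (EngelAlg t) where
  bracket x y := engelBracket t x y
  add_lie x y z := by
    funext i
    change engelBracket t (x + y) z i = engelBracket t x z i + engelBracket t y z i
    fin_cases i <;>
      simp [engelBracket, EngelAlg.add_apply, EngelAlg.zero_apply, Pi.add_apply, Pi.zero_apply] <;> ring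
  lie_add x y z := by
    funext i
    change engelBracket t x (y + z) i = engelBracket t x y i + engelBracket t x z i
    fin_cases i <;>
      simp [engelBracket, EngelAlg.add_apply, EngelAlg.zero_apply, Pi.add_apply, Pi.zero_apply] <;> ring
  lie_self x := by
    funext i; fin_cases i <;>
      simp [engelBracket, EngelAlg.zero_apply, Pi.zero_apply, mul_comm, sub_self]
  leibniz_lie x y z := by
    funext i
    change engelBracket t x (engelBracket t y z) i =
      engelBracket t (engelBracket t x y) z i + engelBracket t y (engelBracket t x z) i
    fin_cases i <;>
      simp [engelBracket, EngelAlg.add_apply, EngelAlg.zero_apply, Pi.add_apply, Pi.zero_apply] <;> ring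

noncomputable instance (t : ℝ) : LieAlgebra ℝ (EngelAlg t) where
  lie_smul r x y := by
    funext i
    change engelBracket t x (r • y) i = r * engelBracket t x y i
    fin_cases i <;>
      simp [Bracket.bracket, engelBracket, EngelAlg.smul_apply, EngelAlg.zero_apply, Pi.smul_apply, smul_eq_mul] <;> ring

/-- The canonical basis vectors `X1, X2, X3, X4` (indexed by `Fin 4`). -/
noncomputable def X (t : ℝ) (i : Fin 4) : EngelAlg t := Pi.single i 1


/-- The universal enveloping algebra `U(𝔤_t)`. -/
noncomputable abbrev UEngel (t : ℝ) := UniversalEnvelopingAlgebra ℝ (EngelAlg t)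

/-- The images `X1, X2, X3, X4` of the canonical basis in `U(𝔤_t)`
(indexed by `Fin 4`). -/
noncomputable def XU (t : ℝ) (i : Fin 4) : UEngel t :=
  UniversalEnvelopingAlgebra.ι ℝ (X t i)

open Matrix

/-!
The identity is pure matrix arithmetic over any ring; the Engel relations play no role. Since
`d00 = 0`, only `d01ᵀ * d1` contributes, and as `d01` has just two nonzero entries, `-1` at
`(0, 2)` and `-t` at `(1, 3)`, that product is zero except for rows `2` and `3`, which are
`-(row 0 of d1)` and `-t • (row 1 of d1)`.
-/

lemma transpose_mul_of_two_nonzero_entries {A : Type*} [Ring A] (a b : A)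
    (M : Matrix (Fin 6) (Fin 4) A) :
    (!![0, 0, a, 0; 0, 0, 0, b; 0, 0, 0, 0; 0, 0, 0, 0; 0, 0, 0, 0; 0, 0, 0, 0])ᵀ * M =
      Matrix.of ![0, 0, fun j => a * M 0 j, fun j => b * M 1 j] := by
  ext i j
  fin_cases i <;> simp [Matrix.mul_apply, Fin.sum_univ_six]

/-- `Box^{(1)} = d^{(0)}·(d_0^{(0)})ᵀ + (d_0^{(1)})ᵀ·d^{(1)}` over `U(𝔤_t)`, where
`d_0^{(0)}` is the 4×1 zero matrix, `d_0^{(1)}` is the 6×4 matrix whose only nonzero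
entries are `−1` at `(1,3)` and `−t` at `(2,4)`, and `Box^{(1)}` has rows
`(0,0,0,0)`, `(0,0,0,0)`, `(X2, −X1, 1, 0)`, `(tX3, 0, −tX1, t²)`. -/
theorem engel_box1_formula (t : ℝ) :
    let X1 := XU t 0; let X2 := XU t 1; let X3 := XU t 2; let X4 := XU t 3
    let Box1 : Matrix (Fin 4) (Fin 4) (UEngel t) :=
      !![0, 0, 0, 0;
         0, 0, 0, 0;
         X2, -X1, 1, 0;
         t • X3, 0, -(t • X1), algebraMap ℝ (UEngel t) (t ^ 2)]
    let d0 : Matrix (Fin 4) (Fin 1) (UEngel t) := !![X1; X2; X3; X4]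
    let d00 : Matrix (Fin 4) (Fin 1) (UEngel t) := 0
    let d01 : Matrix (Fin 6) (Fin 4) (UEngel t) :=
      !![0, 0, -1, 0;
         0, 0, 0, -(algebraMap ℝ (UEngel t) t);
         0, 0, 0, 0;
         0, 0, 0, 0;
         0, 0, 0, 0;
         0, 0, 0, 0]
    let d1 : Matrix (Fin 6) (Fin 4) (UEngel t) :=
      !![-X2, X1, -1, 0;
         -X3, 0, X1, -(algebraMap ℝ (UEngel t) t);
         0, -X3, X2, 0;
         -X4, 0, 0, X1;
         0, -X4, 0, X2;
         0, 0, -X4, X3]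
    Box1 = d0 * d00ᵀ + d01ᵀ * d1 := by
  intro X1 X2 X3 X4 Box1 d0 d00 d01 d1
  rw [show d00ᵀ = 0 from transpose_zero, Matrix.mul_zero, zero_add,
    transpose_mul_of_two_nonzero_entries]
  ext i j
  fin_cases i <;> fin_cases j <;> simp [Box1, d1, Algebra.smul_def, sq]
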